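/- Let V be the 2-dimensional F₂-vector space with basis v₊, v₋, with multiplication m : V ⊗ V → V determined by m(v₊⊗v₊)=v₊, m(v₊⊗v₋)=m(v₋⊗v₊)=v₋, m(v₋⊗v₋)=0 and comultiplication Δ(v₊)=v₊⊗v₋+v₋⊗v₊, Δ(v₋)=v₋⊗v₋. Let (V₀, V₁, f, g) be F₂-vector spaces with linear maps f : V₀ → V₁, g : V₁ → V₀ satisfying f∘g = 0 and g∘f = 0. For i = 0,1, give Vᵢ the trivial module and comodule structure mᵢ : Vᵢ ⊗ V → Vᵢ, mᵢ(y⊗v₊)=y, mᵢ(y⊗v₋)=0, and Δᵢ : Vᵢ → Vᵢ ⊗ V, Δᵢ(y)=y⊗v₋. Define f_m = m₁∘(f⊗id_V) : V₀⊗V → V₁, g_m = m₀∘(g⊗id_V) : V₁⊗V → V₀, f_Δ = Δ₁∘f : V₀ → V₁⊗V, g_Δ = Δ₀∘g : V₁ → V₀⊗V. Then g_m ∘ f_Δ = 0, f_m ∘ g_Δ = 0, f_Δ ∘ g_m = 0, and g_Δ ∘ f_m = 0. -/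
import Mathlib


open TensorProduct

/-- `v₊, v₋`: the standard basis of the Khovanov Frobenius algebra `V = F₂²`. -/
def vP : Fin 2 → ZMod 2 := Pi.single 0 1
def vM : Fin 2 → ZMod 2 := Pi.single 1 1

/-- for a dyad `(V₀, V₁, f, g)` over `F₂`, with the trivial module and
comodule structures `mᵢ, Δᵢ` on `Vᵢ` over the Khovanov Frobenius algebra `V`, the maps
`f_m = m₁∘(f⊗id)`, `g_m = m₀∘(g⊗id)`, `f_Δ = Δ₁∘f`, `g_Δ = Δ₀∘g` satisfy
`g_m∘f_Δ = 0`, `f_m∘g_Δ = 0`, `f_Δ∘g_m = 0`, `g_Δ∘f_m = 0`. -/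
theorem stmt_10
    (V₀ V₁ : Type) [AddCommGroup V₀] [Module (ZMod 2) V₀]
    [AddCommGroup V₁] [Module (ZMod 2) V₁]
    (f : V₀ →ₗ[ZMod 2] V₁) (g : V₁ →ₗ[ZMod 2] V₀)
    (hfg : f ∘ₗ g = 0) (hgf : g ∘ₗ f = 0)
    (m : ((Fin 2 → ZMod 2) ⊗[ZMod 2] (Fin 2 → ZMod 2)) →ₗ[ZMod 2] (Fin 2 → ZMod 2))
    (Δ : (Fin 2 → ZMod 2) →ₗ[ZMod 2] ((Fin 2 → ZMod 2) ⊗[ZMod 2] (Fin 2 → ZMod 2)))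
    (hmpp : m (vP ⊗ₜ[ZMod 2] vP) = vP)
    (hmpm : m (vP ⊗ₜ[ZMod 2] vM) = vM)
    (hmmp : m (vM ⊗ₜ[ZMod 2] vP) = vM)
    (hmmm : m (vM ⊗ₜ[ZMod 2] vM) = 0)
    (hΔp : Δ vP = vP ⊗ₜ[ZMod 2] vM + vM ⊗ₜ[ZMod 2] vP)
    (hΔm : Δ vM = vM ⊗ₜ[ZMod 2] vM)
    (m₀ : (V₀ ⊗[ZMod 2] (Fin 2 → ZMod 2)) →ₗ[ZMod 2] V₀)
    (hm₀p : ∀ y : V₀, m₀ (y ⊗ₜ[ZMod 2] vP) = y)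
    (hm₀m : ∀ y : V₀, m₀ (y ⊗ₜ[ZMod 2] vM) = 0)
    (m₁ : (V₁ ⊗[ZMod 2] (Fin 2 → ZMod 2)) →ₗ[ZMod 2] V₁)
    (hm₁p : ∀ y : V₁, m₁ (y ⊗ₜ[ZMod 2] vP) = y)
    (hm₁m : ∀ y : V₁, m₁ (y ⊗ₜ[ZMod 2] vM) = 0)
    (Δ₀ : V₀ →ₗ[ZMod 2] (V₀ ⊗[ZMod 2] (Fin 2 → ZMod 2)))
    (hΔ₀ : ∀ y : V₀, Δ₀ y = y ⊗ₜ[ZMod 2] vM)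
    (Δ₁ : V₁ →ₗ[ZMod 2] (V₁ ⊗[ZMod 2] (Fin 2 → ZMod 2)))
    (hΔ₁ : ∀ y : V₁, Δ₁ y = y ⊗ₜ[ZMod 2] vM)
    (f_m : (V₀ ⊗[ZMod 2] (Fin 2 → ZMod 2)) →ₗ[ZMod 2] V₁)
    (hf_m : f_m = m₁ ∘ₗ TensorProduct.map f LinearMap.id)
    (g_m : (V₁ ⊗[ZMod 2] (Fin 2 → ZMod 2)) →ₗ[ZMod 2] V₀)
    (hg_m : g_m = m₀ ∘ₗ TensorProduct.map g LinearMap.id)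
    (f_Δ : V₀ →ₗ[ZMod 2] (V₁ ⊗[ZMod 2] (Fin 2 → ZMod 2)))
    (hf_Δ : f_Δ = Δ₁ ∘ₗ f)
    (g_Δ : V₁ →ₗ[ZMod 2] (V₀ ⊗[ZMod 2] (Fin 2 → ZMod 2)))
    (hg_Δ : g_Δ = Δ₀ ∘ₗ g) :
    g_m ∘ₗ f_Δ = 0 ∧ f_m ∘ₗ g_Δ = 0 ∧ f_Δ ∘ₗ g_m = 0 ∧ g_Δ ∘ₗ f_m = 0 := by
  have hbasis : ∀ v : Fin 2 → ZMod 2, v = v 0 • vP + v 1 • vM := by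
    intro v
    funext i
    fin_cases i <;> simp [vP, vM, Pi.single_apply]
  have hfg' : ∀ y, f (g y) = 0 := fun y => congrFun (congrArg DFunLike.coe hfg) y
  have hgf' : ∀ y, g (f y) = 0 := fun y => congrFun (congrArg DFunLike.coe hgf) y
  refine ⟨?_, ?_, ?_, ?_⟩
  · ext x
    simp [hg_m, hf_Δ, hΔ₁, hgf', hm₀m]
  · ext x
    simp [hf_m, hg_Δ, hΔ₀, hfg', hm₁m]
  · apply TensorProduct.ext'
    intro y v
    rw [hbasis v]
    simp [hg_m, hf_Δ, hΔ₁, tmul_add, tmul_smul, hm₀p, hm₀m, hfg']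
  · apply TensorProduct.ext'
    intro y v
    rw [hbasis v]
    simp [hf_m, hg_Δ, hΔ₀, tmul_add, tmul_smul, hm₁p, hm₁m, hgf']
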